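/- arXiv:2008.13250 — 3 statements merged into one kernel-verified Lean document; each statement's English description precedes it below -/
import Mathlib

section
/- Let A be a g-tuple of d×d real symmetric matrices with D_A bounded, and let (X_0, X) be a (g+1)-tuple of n×n real symmetric matrices with I ⊗ X_0 + Σ A_i ⊗ X_i ⪰ 0. Then ker X_0 ⊆ ker X_i for all i = 1, ..., g. -/
/-!
If `∑ bᵢ Aᵢ ⪰ 0` then the whole ray `s • b`, `s ≥ 0`, lies in `D_A(1)`, so boundedness
forces `b = 0`. For `v ∈ ker X₀` the quadratic form of the pencil at `u ⊗ v` is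
`∑ (vᵀXᵢv)(uᵀAᵢu)`, hence `∑ (vᵀXᵢv) Aᵢ ⪰ 0` and all `vᵀXᵢv` vanish. Then `u ⊗ v` is isotropic
for a positive semidefinite matrix, so it lies in its kernel; pairing with `u ⊗ y` shows that
`∑ (yᵀXᵢv) Aᵢ` has zero quadratic form, so `yᵀXᵢv = 0` for every `y`, i.e. `Xᵢ v = 0`.
-/

open Matrix
open scoped Kronecker

namespace Matrix

variable {R ι l l' n n' : Type*}

def vecKron [Mul R] (u : l → R) (w : n → R) : l × n → R := fun p => u p.1 * w p.2

section CommSemiring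

variable [CommSemiring R] [Fintype l] [Fintype n]

theorem kronecker_mulVec_vecKron (B : Matrix l' l R) (Y : Matrix n' n R) (u : l → R)
    (w : n → R) : (B ⊗ₖ Y) *ᵥ vecKron u w = vecKron (B *ᵥ u) (Y *ᵥ w) := by
  ext ⟨i, j⟩
  simp only [vecKron, mulVec, dotProduct, kroneckerMap_apply, Fintype.sum_prod_type,
    Finset.sum_mul_sum]
  exact Finset.sum_congr rfl fun _ _ => Finset.sum_congr rfl fun _ _ => by ring

theorem vecKron_dotProduct_vecKron (a c : l → R) (b e : n → R) :
    vecKron a b ⬝ᵥ vecKron c e = (a ⬝ᵥ c) * (b ⬝ᵥ e) := by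
  simp only [vecKron, dotProduct, Fintype.sum_prod_type, Finset.sum_mul_sum]
  exact Finset.sum_congr rfl fun _ _ => Finset.sum_congr rfl fun _ _ => by ring

theorem vecKron_dotProduct_pencil_mulVec_vecKron [Fintype ι] [DecidableEq l]
    (A : ι → Matrix l l R) {X₀ : Matrix n n R} (X : ι → Matrix n n R) {v : n → R}
    (hv : X₀ *ᵥ v = 0) (u : l → R) (y : n → R) :
    vecKron u y ⬝ᵥ (1 ⊗ₖ X₀ + ∑ i, A i ⊗ₖ X i) *ᵥ vecKron u v
      = ∑ i, (y ⬝ᵥ X i *ᵥ v) * (u ⬝ᵥ A i *ᵥ u) := by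
  simp only [add_mulVec, sum_mulVec, kronecker_mulVec_vecKron, hv, dotProduct_add,
    dotProduct_sum, vecKron_dotProduct_vecKron, dotProduct_zero, mul_zero, zero_add]
  exact Finset.sum_congr rfl fun _ _ => mul_comm _ _

end CommSemiring

section FreeSpectrahedron

variable [Fintype ι] [DecidableEq l]

def FreeSpectrahedronBoundedBy (A : ι → Matrix l l ℝ) (C : ℝ) : Prop :=
  ∀ (m : ℕ) (Z : ι → Matrix (Fin m) (Fin m) ℝ),
    (∀ i, (Z i).IsSymm) → (1 + ∑ i, A i ⊗ₖ Z i).PosSemidef →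
    (C • (1 : Matrix (Fin m) (Fin m) ℝ) - ∑ i, Z i * Z i).PosSemidef

variable [Fintype l] {A : ι → Matrix l l ℝ} {C : ℝ}

theorem FreeSpectrahedronBoundedBy.dotProduct_self_le (hA : FreeSpectrahedronBoundedBy A C)
    {z : ι → ℝ} (hz : (1 + ∑ i, z i • A i).PosSemidef) : z ⬝ᵥ z ≤ C := by
  set Z : ι → Matrix (Fin 1) (Fin 1) ℝ := fun i => z i • 1
  have hpencil : 1 + ∑ i, A i ⊗ₖ Z i = (1 + ∑ i, z i • A i) ⊗ₖ 1 := by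
    ext ⟨p, a⟩ ⟨q, b⟩
    obtain rfl := Subsingleton.elim a b
    simp [Z, one_apply, Matrix.sum_apply, mul_comm]
  have h := (hA 1 Z (fun i => isSymm_one.smul (z i))
    (hpencil ▸ hz.kronecker PosSemidef.one)).diag_nonneg (i := 0)
  simpa [Z, Matrix.sum_apply, dotProduct] using h

theorem FreeSpectrahedronBoundedBy.eq_zero_of_posSemidef (hA : FreeSpectrahedronBoundedBy A C)
    {b : ι → ℝ} (hb : (∑ i, b i • A i).PosSemidef) : b = 0 := by
  have hray : ∀ s : ℝ, 0 ≤ s → s ^ 2 * (b ⬝ᵥ b) ≤ C := fun s hs => by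
    have h := hA.dotProduct_self_le (z := s • b) (by
      simpa [Finset.smul_sum, smul_smul] using PosSemidef.one.add (hb.smul hs))
    simpa [smul_dotProduct, dotProduct_smul, ← mul_assoc, sq] using h
  have hC : 0 ≤ C := by simpa using hray 0 le_rfl
  have hbb : 0 ≤ b ⬝ᵥ b := Finset.sum_nonneg fun i _ => mul_self_nonneg (b i)
  refine dotProduct_self_eq_zero.1 (le_antisymm ?_ hbb)
  by_contra! hpos
  have h := hray (1 + C / (b ⬝ᵥ b)) (by positivity)
  have hlin : (1 + C / (b ⬝ᵥ b)) * (b ⬝ᵥ b) = b ⬝ᵥ b + C := by field_simp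
  nlinarith

theorem FreeSpectrahedronBoundedBy.eq_zero_of_forall_nonneg (hA : FreeSpectrahedronBoundedBy A C)
    (hsymm : ∀ i, (A i).IsSymm) {c : ι → ℝ}
    (hc : ∀ u, 0 ≤ ∑ i, c i * (u ⬝ᵥ A i *ᵥ u)) : c = 0 := by
  refine hA.eq_zero_of_posSemidef (.of_dotProduct_mulVec_nonneg ?_ fun u => ?_)
  · exact isHermitian_iff_isSymm.2 (by simp [IsSymm, transpose_sum, fun i => (hsymm i).eq])
  · simpa [sum_mulVec, dotProduct_sum, smul_mulVec, dotProduct_smul] using hc u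

end FreeSpectrahedron

end Matrix

theorem kernel_of_homogeneous_component_subset_general
    (g d n : ℕ)
    (A : Fin g → Matrix (Fin d) (Fin d) ℝ) (hA : ∀ i, (A i).IsSymm)
    (hbdd : ∃ C : ℝ, 0 < C ∧ ∀ (m : ℕ) (Z : Fin g → Matrix (Fin m) (Fin m) ℝ),
      (∀ i, (Z i).IsSymm) → (1 + ∑ i, A i ⊗ₖ Z i).PosSemidef →
      (C • (1 : Matrix (Fin m) (Fin m) ℝ) - ∑ i, Z i * Z i).PosSemidef)
    (X0 : Matrix (Fin n) (Fin n) ℝ)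
    (X : Fin g → Matrix (Fin n) (Fin n) ℝ)
    (hpsd : ((1 : Matrix (Fin d) (Fin d) ℝ) ⊗ₖ X0 + ∑ i, A i ⊗ₖ X i).PosSemidef) :
    ∀ v : Fin n → ℝ, X0 *ᵥ v = 0 → ∀ i, X i *ᵥ v = 0 := by
  obtain ⟨C, -, hbound⟩ := hbdd
  have hD : FreeSpectrahedronBoundedBy A C := hbound
  intro v hv
  have hquad := vecKron_dotProduct_pencil_mulVec_vecKron A X hv
  have hdiag : ∀ i, v ⬝ᵥ X i *ᵥ v = 0 := congrFun <| hD.eq_zero_of_forall_nonneg hA fun u => by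
    simpa [hquad] using hpsd.dotProduct_mulVec_nonneg (vecKron u v)
  have hker : ∀ u, (1 ⊗ₖ X0 + ∑ i, A i ⊗ₖ X i) *ᵥ vecKron u v = 0 := fun u =>
    (hpsd.dotProduct_mulVec_zero_iff _).1 (by simp [hquad, hdiag])
  intro i
  have hoff := hD.eq_zero_of_forall_nonneg hA (c := fun j => X i *ᵥ v ⬝ᵥ X j *ᵥ v) fun u => by
    rw [← hquad u, hker, dotProduct_zero]
  exact dotProduct_self_eq_zero.1 (congrFun hoff i)

/-- If the free spectrahedron `D_A` is bounded and
`I ⊗ X₀ + Σ Aᵢ ⊗ Xᵢ ⪰ 0`, then `ker X₀ ⊆ ker Xᵢ` for all `i`. -/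
theorem kernel_of_homogeneous_component_subset
    (g d n : ℕ)
    (A : Fin g → Matrix (Fin d) (Fin d) ℝ) (hA : ∀ i, (A i).IsSymm)
    (hbdd : ∃ C : ℝ, 0 < C ∧ ∀ (m : ℕ) (Z : Fin g → Matrix (Fin m) (Fin m) ℝ),
      (∀ i, (Z i).IsSymm) → (1 + ∑ i, A i ⊗ₖ Z i).PosSemidef →
      (C • (1 : Matrix (Fin m) (Fin m) ℝ) - ∑ i, Z i * Z i).PosSemidef)
    (X0 : Matrix (Fin n) (Fin n) ℝ) (hX0 : X0.IsSymm)
    (X : Fin g → Matrix (Fin n) (Fin n) ℝ) (hX : ∀ i, (X i).IsSymm)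
    (hpsd : ((1 : Matrix (Fin d) (Fin d) ℝ) ⊗ₖ X0 + ∑ i, A i ⊗ₖ X i).PosSemidef) :
    ∀ v : Fin n → ℝ, X0 *ᵥ v = 0 → ∀ i, X i *ᵥ v = 0 :=
  kernel_of_homogeneous_component_subset_general g d n A hA hbdd X0 X hpsd
end

section
/- A pair (X_1, X_2) of n×n real symmetric matrices is an Arveson extreme point of the free square C (defined by X_i^2 ⪯ I, i=1,2) if and only if X_1^2 = I and X_2^2 = I. Here (X_1,X_2) ∈ C is Arveson extreme if whenever Y = ((X_1, X_2) augmented by a row block) of the form Y_i = [[X_i, β_i],[β_i^T, γ_i]] lies in C, then β_1 = β_2 = 0. -/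
open Matrix

/-- Membership in the free square: both coordinates are symmetric contractions. -/
def InFreeSquare {m : Type*} [Fintype m] [DecidableEq m] (X1 X2 : Matrix m m ℝ) : Prop :=
  (1 - X1 * X1).PosSemidef ∧ (1 - X2 * X2).PosSemidef

/-!
If `X² = 1`, the top-left block of `1 - Y²` for a dilation `Y = [[X, β], [βᵀ, γ]]` is `-ββᵀ`,
which is positive semidefinite only when `β = 0`. Conversely, for a symmetric contraction `X`
the dilation `Y = [[X, 1 - X²], [1 - X², -X]]` is again a contraction, because
`1 - Y² = diag(X(1 - X²)X, X(1 - X²)X)`; pairing it with the trivial dilation `diag(X₂, 0)` of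
the other coordinate, extremality forces `1 - X² = 0`.
-/

namespace Matrix

theorem fromBlocks_sub {l m n o α : Type*} [AddGroup α] (A A' : Matrix n l α)
    (B B' : Matrix n m α) (C C' : Matrix o l α) (D D' : Matrix o m α) :
    fromBlocks A B C D - fromBlocks A' B' C' D' =
      fromBlocks (A - A') (B - B') (C - C') (D - D') := by
  simp only [sub_eq_add_neg, fromBlocks_neg, fromBlocks_add]

variable {m n R : Type*} [Fintype m] [Fintype n]

section Ring

variable [DecidableEq m] [DecidableEq n] [Ring R]

theorem one_sub_fromBlocks_zero_mul_self (X : Matrix m m R) (γ : Matrix n n R) :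
    1 - fromBlocks X 0 0 γ * fromBlocks X 0 0 γ = fromBlocks (1 - X * X) 0 0 (1 - γ * γ) := by
  simp [fromBlocks_multiply, ← fromBlocks_one, fromBlocks_sub]

/-- `1 - X * X` stands in for the defect operator `(1 - X * X)^(1/2)` of Halmos's dilation: the
off-diagonal blocks cancel as soon as it commutes with `X`. -/
theorem one_sub_fromBlocks_defect_mul_self (X : Matrix m m R) :
    1 - fromBlocks X (1 - X * X) (1 - X * X) (-X) * fromBlocks X (1 - X * X) (1 - X * X) (-X) =
      fromBlocks (X * (1 - X * X) * X) 0 0 (X * (1 - X * X) * X) := by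
  rw [fromBlocks_multiply, ← fromBlocks_one, fromBlocks_sub]
  congr 1 <;> noncomm_ring

theorem toBlocks₁₁_one_sub_fromBlocks_mul_self [StarRing R] (X : Matrix m m R)
    (β : Matrix m n R) (γ : Matrix n n R) :
    (1 - fromBlocks X β βᴴ γ * fromBlocks X β βᴴ γ).toBlocks₁₁ = 1 - X * X - β * βᴴ := by
  rw [fromBlocks_multiply, ← fromBlocks_one, fromBlocks_sub, toBlocks_fromBlocks₁₁,
    sub_add_eq_sub_sub]

end Ring

variable [CommRing R] [PartialOrder R] [StarRing R] [StarOrderedRing R]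

theorem PosSemidef.fromBlocks_zero {A : Matrix m m R} {D : Matrix n n R}
    (hA : A.PosSemidef) (hD : D.PosSemidef) : (fromBlocks A 0 0 D).PosSemidef := by
  refine .of_dotProduct_mulVec_nonneg (hA.1.fromBlocks (by simp) hD.1) fun x => ?_
  rw [← Sum.elim_comp_inl_inr x, fromBlocks_mulVec, Function.star_sumElim,
    sumElim_dotProduct_sumElim]
  simpa using add_nonneg (hA.dotProduct_mulVec_nonneg (x ∘ Sum.inl))
    (hD.dotProduct_mulVec_nonneg (x ∘ Sum.inr))

theorem eq_zero_of_posSemidef_neg_mul_conjTranspose_self [NoZeroDivisors R] {B : Matrix m n R}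
    (h : (-(B * Bᴴ)).PosSemidef) : B = 0 := by
  refine trace_mul_conjTranspose_self_eq_zero_iff.mp <|
    le_antisymm ?_ (posSemidef_self_mul_conjTranspose B).trace_nonneg
  simpa using h.trace_nonneg

variable [DecidableEq m] [DecidableEq n]

theorem eq_zero_of_posSemidef_one_sub_fromBlocks_mul_self [NoZeroDivisors R] {X : Matrix m m R}
    {β : Matrix m n R} {γ : Matrix n n R} (hX : X * X = 1)
    (h : (1 - fromBlocks X β βᴴ γ * fromBlocks X β βᴴ γ).PosSemidef) : β = 0 := by
  have h₁₁ : (1 - fromBlocks X β βᴴ γ * fromBlocks X β βᴴ γ).toBlocks₁₁.PosSemidef :=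
    h.submatrix Sum.inl
  rw [toBlocks₁₁_one_sub_fromBlocks_mul_self, hX, sub_self, zero_sub] at h₁₁
  exact eq_zero_of_posSemidef_neg_mul_conjTranspose_self h₁₁

theorem posSemidef_one_sub_fromBlocks_zero_mul_self {X : Matrix m m R} {γ : Matrix n n R}
    (hX : (1 - X * X).PosSemidef) (hγ : (1 - γ * γ).PosSemidef) :
    (1 - fromBlocks X 0 0 γ * fromBlocks X 0 0 γ).PosSemidef := by
  rw [one_sub_fromBlocks_zero_mul_self]
  exact hX.fromBlocks_zero hγ

theorem posSemidef_one_sub_fromBlocks_defect_mul_self {X : Matrix m m R} (hX : X.IsHermitian)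
    (h : (1 - X * X).PosSemidef) :
    (1 - fromBlocks X (1 - X * X) (1 - X * X)ᴴ (-X) *
      fromBlocks X (1 - X * X) (1 - X * X)ᴴ (-X)).PosSemidef := by
  have hXDX : (X * (1 - X * X) * X).PosSemidef := by
    simpa only [hX.eq] using h.conjTranspose_mul_mul_same X
  rw [h.1.eq, one_sub_fromBlocks_defect_mul_self]
  exact hXDX.fromBlocks_zero hXDX

end Matrix

def IsArvesonExtreme {n : ℕ} (X1 X2 : Matrix (Fin n) (Fin n) ℝ) : Prop :=
  ∀ (m : ℕ) (β1 β2 : Matrix (Fin n) (Fin m) ℝ) (γ1 γ2 : Matrix (Fin m) (Fin m) ℝ),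
    γ1.IsSymm → γ2.IsSymm →
    InFreeSquare (fromBlocks X1 β1 β1ᵀ γ1) (fromBlocks X2 β2 β2ᵀ γ2) → β1 = 0 ∧ β2 = 0

namespace IsArvesonExtreme

variable {n : ℕ} {X1 X2 : Matrix (Fin n) (Fin n) ℝ}

theorem symm (h : IsArvesonExtreme X1 X2) : IsArvesonExtreme X2 X1 :=
  fun m β1 β2 γ1 γ2 hγ1 hγ2 hY => (h m β2 β1 γ2 γ1 hγ2 hγ1 (And.symm hY)).symm

theorem mul_self_eq_one_left (h : IsArvesonExtreme X1 X2) (h1 : X1.IsSymm)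
    (hmem : InFreeSquare X1 X2) : X1 * X1 = 1 := by
  have hdefect := posSemidef_one_sub_fromBlocks_defect_mul_self (isHermitian_iff_isSymm.mpr h1)
    hmem.1
  rw [conjTranspose_eq_transpose_of_trivial] at hdefect
  have htrivial := posSemidef_one_sub_fromBlocks_zero_mul_self (γ := (0 : Matrix (Fin n) (Fin n) ℝ))
    hmem.2 (by simpa using PosSemidef.one)
  rw [← transpose_zero] at htrivial
  exact (sub_eq_zero.mp (h n _ _ _ _ h1.neg isSymm_zero ⟨hdefect, htrivial⟩).1).symm

end IsArvesonExtreme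

theorem isArvesonExtreme_of_mul_self_eq_one {n : ℕ} {X1 X2 : Matrix (Fin n) (Fin n) ℝ}
    (h1 : X1 * X1 = 1) (h2 : X2 * X2 = 1) : IsArvesonExtreme X1 X2 := by
  intro m β1 β2 γ1 γ2 _ _ hY
  simp only [InFreeSquare, ← conjTranspose_eq_transpose_of_trivial] at hY
  exact ⟨eq_zero_of_posSemidef_one_sub_fromBlocks_mul_self h1 hY.1,
    eq_zero_of_posSemidef_one_sub_fromBlocks_mul_self h2 hY.2⟩

/-- A pair `(X₁,X₂)` in the free square is an Arveson extreme point
(every dilation staying in the free square has zero off-diagonal blocks) iff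
`X₁² = I` and `X₂² = I`. -/
theorem arveson_extreme_free_square_iff
    (n : ℕ) (X1 X2 : Matrix (Fin n) (Fin n) ℝ)
    (h1 : X1.IsSymm) (h2 : X2.IsSymm) (hmem : InFreeSquare X1 X2) :
    (∀ (m : ℕ) (β1 β2 : Matrix (Fin n) (Fin m) ℝ) (γ1 γ2 : Matrix (Fin m) (Fin m) ℝ),
        γ1.IsSymm → γ2.IsSymm →
        InFreeSquare (Matrix.fromBlocks X1 β1 β1ᵀ γ1) (Matrix.fromBlocks X2 β2 β2ᵀ γ2) →
        β1 = 0 ∧ β2 = 0) ↔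
    (X1 * X1 = 1 ∧ X2 * X2 = 1) := by
  change IsArvesonExtreme X1 X2 ↔ _
  exact ⟨fun h => ⟨h.mul_self_eq_one_left h1 hmem,
      h.symm.mul_self_eq_one_left h2 (And.symm hmem)⟩,
    fun h => isArvesonExtreme_of_mul_self_eq_one h.1 h.2⟩
end

section
/- Let X = (X_1, X_2) be a pair of n×n real symmetric matrices with X_1^2 = I and X_2^2 = I. If n > 2, then X_1 and X_2 have a common nontrivial reducing subspace; i.e., there exists a symmetric matrix S ∈ SM_n(R), not a scalar multiple of the identity, commuting with both X_1 and X_2. -/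
open Matrix Module Submodule

/-!
The anticommutator `X₁X₂ + X₂X₁` commutes with both involutions, so it settles the claim unless
it equals `c • 1`. In that case, for an eigenvector `v` of `X₁` (one of `u`, `u + X₁u` works), the
relation `X₁X₂v = cv - X₂X₁v` shows that `span {v, X₂v}` is invariant under `X₁` and `X₂`. Since
`n > 2` this subspace is proper and nonzero, and because `X₁, X₂` are symmetric its orthogonal
complement is invariant as well, so the orthogonal projection onto it is a symmetric non-scalar
matrix commuting with both.
-/

theorem commute_mul_add_mul_self_of_mul_self_eq_one {R : Type*} [Ring R] {a : R}
    (ha : a * a = 1) (b : R) : Commute (a * b + b * a) a := by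
  change (a * b + b * a) * a = a * (a * b + b * a)
  simp only [add_mul, mul_add, mul_assoc, ha, mul_one]
  rw [← mul_assoc a a b, ha, one_mul, add_comm]

theorem Module.End.exists_hasEigenvector_of_mul_self_eq_one {R M : Type*} [CommRing R]
    [AddCommGroup M] [Module R M] [Nontrivial M] {T : End R M} (hT : T * T = 1) :
    ∃ μ v, T.HasEigenvector μ v := by
  obtain ⟨u, hu⟩ := exists_ne (0 : M)
  have hTTu : T (T u) = u := by rw [← End.mul_apply, hT, End.one_apply]
  by_cases h : T u + u = 0
  · refine ⟨-1, u, ?_, hu⟩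
    rw [mem_eigenspace_iff, neg_one_smul, eq_neg_iff_add_eq_zero, h]
  · refine ⟨1, T u + u, ?_, h⟩
    rw [mem_eigenspace_iff, one_smul, map_add, hTTu, add_comm]

theorem Module.End.span_pair_mem_invtSubmodule_of_mul_add_mul_eq_smul_one {K V : Type*}
    [Field K] [AddCommGroup V] [Module K V] {A B : End K V} {c : K}
    (hAB : A * B + B * A = c • 1) (hB : B * B = 1)
    {μ : K} {v : V} (hv : A.HasEigenvector μ v) :
    span K {v, B v} ∈ A.invtSubmodule ∧ span K {v, B v} ∈ B.invtSubmodule := by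
  have hAv : A v = μ • v := hv.apply_eq_smul
  have hABv : A (B v) = c • v - μ • B v := by
    have := congrArg (· v) hAB
    simp only [LinearMap.add_apply, End.mul_apply, LinearMap.smul_apply, End.one_apply, hAv,
      map_smul] at this
    rw [← this]; abel
  have hBBv : B (B v) = v := by rw [← End.mul_apply, hB, End.one_apply]
  have hv_mem : v ∈ span K {v, B v} := subset_span (by simp)
  have hBv_mem : B v ∈ span K {v, B v} := subset_span (by simp)
  constructor <;>
    refine (mem_invtSubmodule _).mpr (span_le.mpr ?_) <;>
    rintro _ (rfl | rfl)
  · simpa [hAv] using smul_mem _ μ hv_mem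
  · simpa [hABv] using sub_mem (smul_mem _ c hv_mem) (smul_mem _ μ hBv_mem)
  · exact hBv_mem
  · simpa [hBBv] using hv_mem

theorem Submodule.span_pair_ne_top_of_two_lt_finrank {K V : Type*} [DivisionRing K]
    [AddCommGroup V] [Module K V] (h : 2 < finrank K V) (x y : V) : span K {x, y} ≠ ⊤ := by
  classical
  intro htop
  have hle : finrank K (span K {x, y}) ≤ 2 := by
    have := finrank_span_finset_le_card (R := K) ({x, y} : Finset V)
    rw [Set.finrank, Finset.coe_pair] at this
    exact this.trans (Finset.card_insert_le _ _)
  rw [htop, finrank_top] at hle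
  omega

section InnerProductSpace

variable {𝕜 E : Type*} [RCLike 𝕜] [NormedAddCommGroup E] [InnerProductSpace 𝕜 E]

theorem ContinuousLinearMap.commute_starProjection_of_mem_invtSubmodule [CompleteSpace E]
    {T : E →L[𝕜] E} (hT : IsSelfAdjoint T) {W : Submodule 𝕜 E} [W.HasOrthogonalProjection]
    (hW : W ∈ End.invtSubmodule (T : E →ₗ[𝕜] E)) : Commute W.starProjection T := by
  refine (IsIdempotentElem.commute_iff W.isIdempotentElem_starProjection).mpr ⟨?_, ?_⟩
  · rwa [range_starProjection]
  · rw [ker_starProjection]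
    exact orthogonal_mem_invtSubmodule (by rwa [hT.adjoint_eq])

theorem Submodule.starProjection_ne_smul_one {W : Submodule 𝕜 E} [W.HasOrthogonalProjection]
    (hbot : W ≠ ⊥) (htop : W ≠ ⊤) (c : 𝕜) : W.starProjection ≠ c • 1 := by
  intro h
  obtain ⟨w, hwW, hw0⟩ := W.ne_bot_iff.mp hbot
  obtain ⟨u, huW⟩ : ∃ u, u ∉ W := by
    by_contra! hall
    exact htop (eq_top_iff'.mpr hall)
  have hc : c = 1 := by
    have hw := starProjection_eq_self_iff.mpr hwW
    rw [h, _root_.smul_apply, one_apply_eq_self] at hw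
    exact smul_left_injective 𝕜 hw0 (hw.trans (one_smul 𝕜 w).symm)
  exact huW (starProjection_eq_self_iff.mp (by rw [h, hc, one_smul]; rfl))

end InnerProductSpace

theorem Matrix.exists_isHermitian_ne_smul_one_commute_of_mem_invtSubmodule
    {𝕜 m ι : Type*} [RCLike 𝕜] [Fintype m] [DecidableEq m] {X : ι → Matrix m m 𝕜}
    (hX : ∀ i, (X i).IsHermitian) {W : Submodule 𝕜 (EuclideanSpace 𝕜 m)}
    (hW : ∀ i, W ∈ End.invtSubmodule (toEuclideanLin (X i))) (hbot : W ≠ ⊥) (htop : W ≠ ⊤) :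
    ∃ S : Matrix m m 𝕜, S.IsHermitian ∧ (∀ c : 𝕜, S ≠ c • 1) ∧ ∀ i, Commute S (X i) := by
  let e := toEuclideanCLM (𝕜 := 𝕜) (n := m)
  refine ⟨e.symm W.starProjection, ?_, fun c hc => ?_, fun i => ?_⟩
  · refine isHermitian_iff_isSelfAdjoint.mpr (EquivLike.injective e ?_)
    rw [map_star, e.apply_symm_apply, (isSelfAdjoint_starProjection W).star_eq]
  · apply W.starProjection_ne_smul_one hbot htop c
    simpa using congrArg e hc
  · have hXi : IsSelfAdjoint (e (X i)) := by
      rw [IsSelfAdjoint, ← map_star, (isHermitian_iff_isSelfAdjoint.mp (hX i)).star_eq]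
    simpa using
      (ContinuousLinearMap.commute_starProjection_of_mem_invtSubmodule hXi (hW i)).map e.symm

/-- If `X₁² = I`, `X₂² = I` are symmetric `n × n` with `n > 2`, then the pair
is reducible: some symmetric matrix, not a scalar multiple of the identity, commutes with
both `X₁` and `X₂`. -/
theorem pair_of_symmetries_reducible_of_two_lt
    (n : ℕ) (hn : 2 < n) (X1 X2 : Matrix (Fin n) (Fin n) ℝ)
    (h1 : X1.IsSymm) (h2 : X2.IsSymm)
    (hs1 : X1 * X1 = 1) (hs2 : X2 * X2 = 1) :
    ∃ S : Matrix (Fin n) (Fin n) ℝ, S.IsSymm ∧ (∀ c : ℝ, S ≠ c • 1) ∧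
      S * X1 = X1 * S ∧ S * X2 = X2 * S := by
  by_cases hscalar : ∃ c : ℝ, X1 * X2 + X2 * X1 = c • 1
  · obtain ⟨c, hc⟩ := hscalar
    have : NeZero n := ⟨by omega⟩
    let toEnd (M : Matrix (Fin n) (Fin n) ℝ) : End ℝ (EuclideanSpace ℝ (Fin n)) :=
      (toEuclideanCLM (𝕜 := ℝ) (n := Fin n) M : EuclideanSpace ℝ (Fin n) →L[ℝ] _)
    have hAB : toEnd X1 * toEnd X2 + toEnd X2 * toEnd X1 = c • 1 := by
      simpa [toEnd] using congrArg toEnd hc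
    have hA : toEnd X1 * toEnd X1 = 1 := by simpa [toEnd] using congrArg toEnd hs1
    have hB : toEnd X2 * toEnd X2 = 1 := by simpa [toEnd] using congrArg toEnd hs2
    obtain ⟨μ, v, hv⟩ := End.exists_hasEigenvector_of_mul_self_eq_one hA
    obtain ⟨hW1, hW2⟩ := End.span_pair_mem_invtSubmodule_of_mul_add_mul_eq_smul_one hAB hB hv
    obtain ⟨S, hS, hSc, hSX⟩ :=
      exists_isHermitian_ne_smul_one_commute_of_mem_invtSubmodule (X := ![X1, X2])
        (Fin.forall_fin_two.mpr ⟨isHermitian_iff_isSymm.mpr h1, isHermitian_iff_isSymm.mpr h2⟩)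
        (Fin.forall_fin_two.mpr ⟨hW1, hW2⟩)
        ((Submodule.ne_bot_iff _).mpr ⟨v, subset_span (by simp), hv.2⟩)
        (span_pair_ne_top_of_two_lt_finrank (by simpa using hn) _ _)
    exact ⟨S, isHermitian_iff_isSymm.mp hS, hSc, hSX 0, hSX 1⟩
  · push Not at hscalar
    refine ⟨X1 * X2 + X2 * X1, ?_, hscalar, commute_mul_add_mul_self_of_mul_self_eq_one hs1 X2,
      add_comm (X1 * X2) _ ▸ commute_mul_add_mul_self_of_mul_self_eq_one hs2 X1⟩
    rw [IsSymm, transpose_add, transpose_mul, transpose_mul, h1.eq, h2.eq, add_comm]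
end
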